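/- arXiv:0901.4715 — 5 statements merged into one kernel-verified Lean document; each statement's English description precedes it below -/
import Mathlib

section
/- Suppose θ ∈ Θ and θ ≠ 0, and let ψ̃(x) be the function defined by the same formula ψ̃(x) = (1/2)xᵀx − Σ_{u∈U} (θ_u/π²) Π_{j=1}^m cos(π u_j x_j) on all of ℝ^m. Then ψ̃ is strictly convex on ℝ^m. -/
/-
Reflections `x_j ↦ -x_j` and translations `x_j ↦ x_j + 2` change `ψ` only by an affine function, so
the second derivative of `ψ` at any point in any direction equals the second derivative at a point
of `[0,1]^m` in a reflected direction; hence `ψ` is convex along every line. Along a line `ψ` is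
real-analytic, so if it failed to be strictly convex its second derivative would vanish on an
interval, hence everywhere, and `ψ` would be affine on that line. This is impossible, because `ψ`
differs from `|x|² / 2` by a bounded function.
-/

open Real

/-- The potential function ψ(x|θ) of the structural gradient model, defined by the same
formula on all of ℝ^m. -/
noncomputable def sgmPotential (m : ℕ) (U : Finset (Fin m → ℕ)) (θ : U → ℝ)
    (x : Fin m → ℝ) : ℝ :=
  (1 / 2) * ∑ j, x j ^ 2 -
    ∑ u : U, (θ u / Real.pi ^ 2) * ∏ j, Real.cos (Real.pi * ((u : Fin m → ℕ) j : ℝ) * x j)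

/-- The Hessian matrix D²f(x). -/
noncomputable def hessian (m : ℕ) (f : (Fin m → ℝ) → ℝ) (x : Fin m → ℝ) :
    Matrix (Fin m) (Fin m) ℝ :=
  Matrix.of fun i j => fderiv ℝ (fun y => fderiv ℝ f y (Pi.single j 1)) x (Pi.single i 1)

open Set Matrix Filter Topology
open scoped ContDiff

section LineRestriction

variable {E : Type*} [NormedAddCommGroup E] [NormedSpace ℝ E] {f : E → ℝ}

theorem hasDerivAt_comp_line (hf : Differentiable ℝ f) (x v : E) (t : ℝ) :
    HasDerivAt (fun s : ℝ => f (x + s • v)) (fderiv ℝ f (x + t • v) v) t := by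
  have hline : HasDerivAt (fun s : ℝ => x + s • v) v t := by
    simpa using ((hasDerivAt_id t).smul_const v).const_add x
  exact (hf _).hasFDerivAt.comp_hasDerivAt t hline

theorem deriv_deriv_comp_line (hf : ContDiff ℝ 2 f) (x v : E) (t : ℝ) :
    deriv (deriv fun s : ℝ => f (x + s • v)) t = fderiv ℝ (fderiv ℝ f) (x + t • v) v v := by
  have hf1 : Differentiable ℝ f := hf.differentiable (by norm_num)
  have hf2 : Differentiable ℝ (fderiv ℝ f) :=
    (hf.fderiv_right (m := 1) (by norm_num)).differentiable one_ne_zero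
  have hderiv : deriv (fun s : ℝ => f (x + s • v)) = fun s => fderiv ℝ f (x + s • v) v :=
    funext fun s => (hasDerivAt_comp_line hf1 x v s).deriv
  have hg : Differentiable ℝ fun y => fderiv ℝ f y v :=
    fun y => (hf2 y).clm_apply (differentiableAt_const v)
  rw [hderiv, (hasDerivAt_comp_line hg x v t).deriv,
    fderiv_clm_apply (hf2 _) (differentiableAt_const v)]
  simp

end LineRestriction

theorem dotProduct_hessian_mulVec {m : ℕ} {f : (Fin m → ℝ) → ℝ} {x : Fin m → ℝ}
    (hf : DifferentiableAt ℝ (fderiv ℝ f) x) (v : Fin m → ℝ) :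
    v ⬝ᵥ (hessian m f x *ᵥ v) = fderiv ℝ (fderiv ℝ f) x v v := by
  have hmat : hessian m f x = LinearMap.toMatrix₂' ℝ (fderiv ℝ (fderiv ℝ f) x).toLinearMap₁₂ := by
    ext i j
    simp [hessian, LinearMap.toMatrix₂'_apply, fderiv_clm_apply hf (differentiableAt_const _)]
  rw [hmat, ← Matrix.toLinearMap₂'_apply', Matrix.toLinearMap₂'_toMatrix']
  rfl

theorem deriv_deriv_add_affine {g : ℝ → ℝ} (hg : Differentiable ℝ g) (c₀ c₁ : ℝ) :
    deriv (deriv fun s => g s + (c₀ + c₁ * s)) = deriv (deriv g) := by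
  have hderiv : deriv (fun s => g s + (c₀ + c₁ * s)) = fun s => deriv g s + c₁ := by
    funext s
    exact ((hg s).hasDerivAt.add (((hasDerivAt_id s).const_mul c₁).const_add c₀)).deriv.trans
      (by simp)
  rw [hderiv]
  funext s
  exact deriv_add_const c₁

theorem AnalyticOnNhd.eq_affine_of_deriv_const_on_Icc {φ : ℝ → ℝ}
    (hφ : AnalyticOnNhd ℝ φ univ) {s t : ℝ} (hst : s < t)
    (hconst : ∀ r ∈ Icc s t, deriv φ r = deriv φ s) (r : ℝ) :
    φ r = φ 0 + deriv φ s * r := by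
  have hmid : (s + t) / 2 ∈ Ioo s t := ⟨by linarith, by linarith⟩
  have hev : deriv φ =ᶠ[𝓝 ((s + t) / 2)] fun _ => deriv φ s :=
    eventually_of_mem (Ioo_mem_nhds hmid.1 hmid.2) fun r hr => hconst r (Ioo_subset_Icc_self hr)
  have hderiv : ∀ r, deriv φ r = deriv φ s := fun r =>
    hφ.deriv.eqOn_of_preconnected_of_eventuallyEq analyticOnNhd_const isPreconnected_univ
      (mem_univ _) hev (mem_univ r)
  have hd : Differentiable ℝ φ := fun r => (hφ r (mem_univ r)).differentiableAt
  have hzero : ∀ r, HasDerivAt (fun r => φ r - deriv φ s * r) 0 r := fun r => by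
    simpa [hderiv r] using (hd r).hasDerivAt.fun_sub ((hasDerivAt_id r).const_mul (deriv φ s))
  have := is_const_of_deriv_eq_zero (fun r => (hzero r).differentiableAt)
    (fun r => (hzero r).deriv) r 0
  simp only [mul_zero, sub_zero] at this
  linarith

theorem AnalyticOnNhd.strictConvexOn_univ_of_deriv2_nonneg {φ : ℝ → ℝ}
    (hφ : AnalyticOnNhd ℝ φ univ) (h2 : ∀ t, 0 ≤ deriv^[2] φ t)
    (hφ_affine : ∀ a b : ℝ, ∃ t, φ t ≠ a + b * t) :
    StrictConvexOn ℝ univ φ := by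
  have hmono : Monotone (deriv φ) :=
    monotone_of_deriv_nonneg (fun r => (hφ.deriv r (mem_univ r)).differentiableAt) h2
  refine StrictMono.strictConvexOn_univ_of_deriv (continuousOn_univ.mp hφ.continuousOn)
    fun s t hst => (hmono hst.le).lt_of_ne fun heq => ?_
  obtain ⟨r, hr⟩ := hφ_affine (φ 0) (deriv φ s)
  exact hr (hφ.eq_affine_of_deriv_const_on_Icc hst
    (fun r hr => le_antisymm (heq ▸ hmono hr.2) (hmono hr.1)) r)

theorem exists_ne_affine_of_abs_sub_quadratic_le {φ : ℝ → ℝ} {α β γ C : ℝ} (hα : 0 < α)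
    (h : ∀ t, |φ t - (α * t ^ 2 + β * t + γ)| ≤ C) (a b : ℝ) : ∃ t, φ t ≠ a + b * t := by
  -- the second difference `φ t + φ (-t) - 2 φ 0` vanishes for affine `φ`, but here it is
  -- at least `2 α t ^ 2 - 4 C`
  by_contra! haff
  have hC : 0 ≤ C := (abs_nonneg _).trans (h 0)
  set t := Real.sqrt (4 * C / α + 1)
  have ht : α * t ^ 2 = 4 * C + α := by
    rw [Real.sq_sqrt (by positivity)]; field_simp
  have h0 := abs_le.mp (h 0)
  have hpos := abs_le.mp (h t)
  have hneg := abs_le.mp (h (-t))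
  simp only [haff] at h0 hpos hneg
  nlinarith

theorem strictConvexOn_univ_of_forall_line {E : Type*} [AddCommGroup E] [Module ℝ E] {f : E → ℝ}
    (h : ∀ x v : E, v ≠ 0 → StrictConvexOn ℝ univ fun t : ℝ => f (x + t • v)) :
    StrictConvexOn ℝ univ f := by
  refine ⟨convex_univ, fun x _ y _ hxy a b ha hb hab => ?_⟩
  have key := (h x (y - x) (sub_ne_zero.mpr hxy.symm)).2 (mem_univ 0) (mem_univ 1) zero_ne_one
    ha hb hab
  have hseg : x + b • (y - x) = a • x + b • y := by
    rw [eq_sub_of_add_eq hab]; module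
  simpa [hseg] using key

theorem exists_sign_mul_add_two_mul_int (x : ℝ) :
    ∃ (a y : ℝ) (n : ℤ), (a = 1 ∨ a = -1) ∧ y ∈ Icc 0 1 ∧ x = a * y + 2 * n := by
  set n := round (x / 2)
  have hr : |x - 2 * n| ≤ 1 := by
    have := abs_sub_round (x / 2)
    rw [show x - 2 * n = 2 * (x / 2 - n) by ring, abs_mul, abs_two]
    linarith
  rcases le_total 0 (x - 2 * n) with h | h
  · exact ⟨1, x - 2 * n, n, .inl rfl, ⟨h, (le_abs_self _).trans hr⟩, by ring⟩
  · exact ⟨-1, -(x - 2 * n), n, .inr rfl, ⟨by linarith, (neg_le_abs _).trans hr⟩, by ring⟩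

section Potential

variable (m : ℕ) (U : Finset (Fin m → ℕ)) (θ : U → ℝ)

theorem sgmPotential_contDiff : ContDiff ℝ ω (sgmPotential m U θ) := by
  unfold sgmPotential
  fun_prop

theorem abs_sgmPotential_sub_half_sq_le (x : Fin m → ℝ) :
    |sgmPotential m U θ x - (1 / 2) * ∑ j, x j ^ 2| ≤ ∑ u : U, |θ u| / π ^ 2 := by
  rw [sgmPotential, sub_sub_cancel_left, abs_neg]
  refine (Finset.abs_sum_le_sum_abs _ _).trans (Finset.sum_le_sum fun u _ => ?_)
  rw [abs_mul, abs_div, abs_of_pos (by positivity : (0 : ℝ) < π ^ 2), Finset.abs_prod]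
  exact mul_le_of_le_one_right (by positivity)
    (Finset.prod_le_one (fun _ _ => abs_nonneg _) fun _ _ => abs_cos_le_one _)

theorem sgmPotential_comp_line_ne_affine (x : Fin m → ℝ) {v : Fin m → ℝ} (hv : v ≠ 0) (a b : ℝ) :
    ∃ t, sgmPotential m U θ (x + t • v) ≠ a + b * t := by
  have hα : 0 < (1 / 2) * ∑ j, v j ^ 2 := by
    obtain ⟨j, hj⟩ := Function.ne_iff.mp hv
    have := Finset.sum_pos' (fun i _ => sq_nonneg (v i))
      ⟨j, Finset.mem_univ j, sq_pos_of_ne_zero hj⟩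
    positivity
  refine exists_ne_affine_of_abs_sub_quadratic_le hα (β := ∑ j, x j * v j)
    (γ := (1 / 2) * ∑ j, x j ^ 2) (C := ∑ u : U, |θ u| / π ^ 2) (fun t => ?_) a b
  convert abs_sgmPotential_sub_half_sq_le m U θ (x + t • v) using 3
  simp only [Pi.add_apply, Pi.smul_apply, smul_eq_mul, Finset.mul_sum, Finset.sum_mul,
    ← Finset.sum_add_distrib]
  exact Finset.sum_congr rfl fun j _ => by ring

variable {m U θ}

theorem sgmPotential_reflect_translate {a : Fin m → ℝ} (ha : ∀ j, a j = 1 ∨ a j = -1)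
    (n : Fin m → ℤ) (y : Fin m → ℝ) :
    sgmPotential m U θ (fun j => a j * y j + 2 * n j) =
      sgmPotential m U θ y + ∑ j, 2 * a j * n j * y j + ∑ j, 2 * (n j : ℝ) ^ 2 := by
  have hcos : ∀ (k : ℕ) j, cos (π * k * (a j * y j + 2 * n j)) = cos (π * k * y j) := by
    intro k j
    have harg : π * k * (a j * y j + 2 * n j) =
        a j * (π * k * y j) + (k * n j : ℤ) * (2 * π) := by
      push_cast; ring
    rw [harg, cos_add_int_mul_two_pi]
    rcases ha j with h | h <;> simp [h]
  have hsq : ∀ j, (a j * y j + 2 * n j) ^ 2 =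
      y j ^ 2 + 2 * (2 * a j * n j * y j) + 2 * (2 * (n j : ℝ) ^ 2) := by
    intro j; rcases ha j with h | h <;> rw [h] <;> ring
  simp only [sgmPotential, hcos, hsq, Finset.sum_add_distrib, ← Finset.mul_sum]
  ring

theorem fderiv_fderiv_sgmPotential_reflect_translate {a : Fin m → ℝ}
    (ha : ∀ j, a j = 1 ∨ a j = -1) (n : Fin m → ℤ) (y v : Fin m → ℝ) :
    fderiv ℝ (fderiv ℝ (sgmPotential m U θ)) (fun j => a j * y j + 2 * n j) v v =
      fderiv ℝ (fderiv ℝ (sgmPotential m U θ)) y (fun j => a j * v j) (fun j => a j * v j) := by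
  have hψ : ContDiff ℝ 2 (sgmPotential m U θ) := (sgmPotential_contDiff m U θ).of_le le_top
  set x : Fin m → ℝ := fun j => a j * y j + 2 * n j
  set w : Fin m → ℝ := fun j => a j * v j
  have hline : ∀ s : ℝ, sgmPotential m U θ (x + s • v) = sgmPotential m U θ (y + s • w) +
      ((∑ j, 2 * a j * n j * y j + ∑ j, 2 * (n j : ℝ) ^ 2) + (∑ j, 2 * a j * n j * w j) * s) := by
    intro s
    have hx : x + s • v = fun j => a j * (y + s • w) j + 2 * n j := by
      funext j
      have : a j * a j = 1 := by rcases ha j with h | h <;> simp [h]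
      simp only [x, w, Pi.add_apply, Pi.smul_apply, smul_eq_mul]
      linear_combination (-(s * v j)) * this
    rw [hx, sgmPotential_reflect_translate ha]
    simp only [Pi.add_apply, Pi.smul_apply, smul_eq_mul, mul_add, Finset.sum_add_distrib,
      Finset.sum_mul]
    ring_nf
  have hg : Differentiable ℝ fun s : ℝ => sgmPotential m U θ (y + s • w) :=
    (hψ.differentiable (by norm_num)).comp (by fun_prop)
  calc fderiv ℝ (fderiv ℝ (sgmPotential m U θ)) x v v
      = deriv (deriv fun s : ℝ => sgmPotential m U θ (x + s • v)) 0 := by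
        rw [deriv_deriv_comp_line hψ, zero_smul, add_zero]
    _ = deriv (deriv fun s : ℝ => sgmPotential m U θ (y + s • w)) 0 := by
        simp only [hline]
        rw [deriv_deriv_add_affine hg]
    _ = fderiv ℝ (fderiv ℝ (sgmPotential m U θ)) y w w := by
        rw [deriv_deriv_comp_line hψ, zero_smul, add_zero]

theorem fderiv_fderiv_sgmPotential_nonneg
    (hθ : ∀ x ∈ Icc (0 : Fin m → ℝ) 1, (hessian m (sgmPotential m U θ) x).PosSemidef)
    (x v : Fin m → ℝ) : 0 ≤ fderiv ℝ (fderiv ℝ (sgmPotential m U θ)) x v v := by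
  choose a y n ha hy hx using fun j => exists_sign_mul_add_two_mul_int (x j)
  have hψ : ContDiff ℝ 2 (sgmPotential m U θ) := (sgmPotential_contDiff m U θ).of_le le_top
  rw [show x = fun j => a j * y j + 2 * n j from funext hx,
    fderiv_fderiv_sgmPotential_reflect_translate ha, ← dotProduct_hessian_mulVec
      ((hψ.fderiv_right (m := 1) (by norm_num)).differentiable one_ne_zero y)]
  simpa using (hθ y ⟨fun j => (hy j).1, fun j => (hy j).2⟩).dotProduct_mulVec_nonneg _

end Potential

theorem sgm_potential_strictConvex_general (m : ℕ) (U : Finset (Fin m → ℕ))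
    (θ : U → ℝ)
    (hθ : ∀ x ∈ Set.Icc (0 : Fin m → ℝ) 1,
      (hessian m (sgmPotential m U θ) x).PosSemidef) :
    StrictConvexOn ℝ (Set.univ : Set (Fin m → ℝ)) (sgmPotential m U θ) := by
  have hψ := sgmPotential_contDiff m U θ
  refine strictConvexOn_univ_of_forall_line fun x v hv => ?_
  refine AnalyticOnNhd.strictConvexOn_univ_of_deriv2_nonneg
    (ContDiff.analyticOnNhd (hψ.comp (by fun_prop))) (fun t => ?_)
    (sgmPotential_comp_line_ne_affine m U θ x hv)
  rw [Function.iterate_succ_apply, Function.iterate_one, deriv_deriv_comp_line (hψ.of_le le_top)]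
  exact fderiv_fderiv_sgmPotential_nonneg hθ _ v

/-- If θ is feasible and θ ≠ 0, then the extended potential ψ̃ is strictly convex on ℝ^m. -/
theorem sgm_potential_strictConvex (m : ℕ) (hm : 0 < m) (U : Finset (Fin m → ℕ))
    (θ : U → ℝ) (hθ0 : θ ≠ 0)
    (hθ : ∀ x ∈ Set.Icc (0 : Fin m → ℝ) 1,
      (hessian m (sgmPotential m U θ) x).PosSemidef) :
    StrictConvexOn ℝ (Set.univ : Set (Fin m → ℝ)) (sgmPotential m U θ) :=
  sgm_potential_strictConvex_general m U θ hθ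
end

section
/- For any u ∈ U and any x ∈ [0,1]^m, the partial derivative of log p(x|θ) = log det D²ψ(x|θ) with respect to θ_u, evaluated at θ = 0, equals ‖u‖² Π_{j=1}^m cos(π u_j x_j). -/
open Real

/-- The density p(x|θ) = det D²ψ(x|θ). -/
noncomputable def sgmDensity (m : ℕ) (U : Finset (Fin m → ℕ)) (θ : U → ℝ)
    (x : Fin m → ℝ) : ℝ :=
  (hessian m (sgmPotential m U θ) x).det

/-! The potential is affine in `θ`, so its Hessian is `1 + ∑ᵥ θᵥ Mᵥ` with `Mᵥ = -π⁻² D²φᵥ`,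
where `φᵥ(x) = ∏ⱼ cos (π vⱼ xⱼ)`. Since `det (1 + t M) = 1 + t tr M + O(t²)`, the derivative of
`log det (1 + ∑ᵥ θᵥ Mᵥ)` at `θ = 0` in the direction `eᵤ` is `tr Mᵤ = -π⁻² Δφᵤ`; and each factor of
`φᵤ` is an eigenfunction of `d²/dt²` with eigenvalue `-(π uⱼ)²`, so `Δφᵤ = -π² ‖u‖² φᵤ`. -/

open Finset

section DetLine

variable {n ι : Type*} [Fintype n] [DecidableEq n] [Fintype ι]

theorem hasDerivAt_det_one_add_smul (M : Matrix n n ℝ) :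
    HasDerivAt (fun t : ℝ => (1 + t • M).det) M.trace 0 := by
  set P := (Matrix.det (1 + (Polynomial.X : Polynomial ℝ) • M.map Polynomial.C)).divX.divX
  have hquad : HasDerivAt (fun t : ℝ => P.eval t * t ^ 2) 0 0 := by
    simpa using (P.hasDerivAt 0).fun_mul (hasDerivAt_pow 2 (0 : ℝ))
  have hlin : HasDerivAt (fun t : ℝ => 1 + M.trace * t) M.trace 0 := by
    simpa using ((hasDerivAt_id (0 : ℝ)).const_mul M.trace).const_add 1
  rw [funext (Matrix.det_one_add_smul · M)]
  simpa only [add_zero] using hlin.fun_add hquad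

theorem differentiable_det_one_add_sum_smul (M : ι → Matrix n n ℝ) :
    Differentiable ℝ (fun θ : ι → ℝ => (1 + ∑ k, θ k • M k).det) := by
  simp_rw [Matrix.det_apply', Matrix.add_apply, Matrix.sum_apply, Matrix.smul_apply, smul_eq_mul]
  fun_prop

theorem fderiv_log_det_one_add_sum_smul [DecidableEq ι] (M : ι → Matrix n n ℝ) (i : ι) :
    fderiv ℝ (fun θ : ι → ℝ => Real.log (1 + ∑ k, θ k • M k).det) 0 (Pi.single i 1)
      = (M i).trace := by
  have hlog : DifferentiableAt ℝ (fun θ : ι → ℝ => Real.log (1 + ∑ k, θ k • M k).det) 0 :=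
    (differentiable_det_one_add_sum_smul M 0).log (by simp)
  refine (hlog.hasFDerivAt.hasLineDerivAt _).unique ?_
  have hline (t : ℝ) : ∑ k, (t • Pi.single i 1 : ι → ℝ) k • M k = t • M i := by
    simp [Pi.single_apply]
  simpa only [HasLineDerivAt, zero_add, hline, zero_smul, add_zero, Matrix.det_one, div_one] using
    (hasDerivAt_det_one_add_smul (M i)).log (by simp)

end DetLine

section Hessian

variable {m : ℕ} {f g : (Fin m → ℝ) → ℝ} {x : Fin m → ℝ}

theorem hessian_apply_eq_iteratedFDeriv (hf : ContDiffAt ℝ 2 f x) (i j : Fin m) :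
    hessian m f x i j = iteratedFDeriv ℝ 2 f x ![Pi.single i 1, Pi.single j 1] := by
  have hdf : DifferentiableAt ℝ (fderiv ℝ f) x :=
    (hf.fderiv_right (m := 1) (by norm_num)).differentiableAt (by norm_num)
  rw [iteratedFDeriv_two_apply, hessian, Matrix.of_apply,
    fderiv_clm_apply hdf (differentiableAt_const _)]
  simp

theorem hessian_sub (hf : ContDiffAt ℝ 2 f x) (hg : ContDiffAt ℝ 2 g x) :
    hessian m (fun y => f y - g y) x = hessian m f x - hessian m g x := by
  ext i j
  rw [Matrix.sub_apply, hessian_apply_eq_iteratedFDeriv (hf.sub hg),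
    hessian_apply_eq_iteratedFDeriv hf, hessian_apply_eq_iteratedFDeriv hg,
    fun_iteratedFDeriv_sub_apply hf hg, _root_.sub_apply]

theorem hessian_const_mul (c : ℝ) (hf : ContDiffAt ℝ 2 f x) :
    hessian m (fun y => c * f y) x = c • hessian m f x := by
  ext i j
  change hessian m (fun y => c • f y) x i j = c * hessian m f x i j
  rw [hessian_apply_eq_iteratedFDeriv (hf.const_smul c), hessian_apply_eq_iteratedFDeriv hf,
    iteratedFDeriv_const_smul_apply' hf, _root_.smul_apply, smul_eq_mul]

theorem hessian_sum {ι : Type*} {s : Finset ι} {F : ι → (Fin m → ℝ) → ℝ}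
    (hF : ∀ k ∈ s, ContDiffAt ℝ 2 (F k) x) :
    hessian m (fun y => ∑ k ∈ s, F k y) x = ∑ k ∈ s, hessian m (F k) x := by
  ext i j
  rw [Matrix.sum_apply, hessian_apply_eq_iteratedFDeriv (ContDiffAt.sum hF),
    iteratedFDeriv_fun_sum_apply hF, _root_.sum_apply]
  exact sum_congr rfl fun k hk => (hessian_apply_eq_iteratedFDeriv (hF k hk) i j).symm

theorem hessian_half_sum_sq : hessian m (fun y => 1 / 2 * ∑ j, y j ^ 2) x = 1 := by
  have hgrad (y : Fin m → ℝ) (j : Fin m) :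
      fderiv ℝ (fun y => 1 / 2 * ∑ j, y j ^ 2) y (Pi.single j 1) = y j := by
    rw [((HasFDerivAt.fun_sum fun k _ => (hasFDerivAt_apply k y).pow 2).const_mul (1 / 2)).fderiv]
    simp [Pi.single_apply]
  ext i j
  rw [hessian, Matrix.of_apply, funext (hgrad · j), (hasFDerivAt_apply j x).fderiv]
  simp [Pi.single_apply, Matrix.one_apply, eq_comm]

end Hessian

section SeparableProduct

variable {ι : Type*} [Fintype ι] [DecidableEq ι]

theorem prod_update_apply (g : ι → ℝ → ℝ) (j : ι) (h : ℝ → ℝ) (y : ι → ℝ) :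
    ∏ k, Function.update g j h k (y k) = h (y j) * ∏ k ∈ univ.erase j, g k (y k) := by
  rw [← sdiff_singleton_eq_erase, ← prod_update_of_mem (mem_univ j)]
  exact prod_congr rfl fun k _ => Function.apply_update (fun k (φ : ℝ → ℝ) => φ (y k)) g j h k

theorem fderiv_prod_apply_single {g g' : ι → ℝ → ℝ} (hg : ∀ k t, HasDerivAt (g k) (g' k t) t)
    (y : ι → ℝ) (j : ι) :
    fderiv ℝ (fun z : ι → ℝ => ∏ k, g k (z k)) y (Pi.single j 1)
      = ∏ k, Function.update g j (g' j) k (y k) := by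
  rw [(HasFDerivAt.finsetProd (g := fun k (z : ι → ℝ) => g k (z k)) fun k _ =>
    (hg k (y k)).comp_hasFDerivAt y (hasFDerivAt_apply k y)).fderiv, prod_update_apply]
  simp [Pi.single_apply, mul_comm]

end SeparableProduct

theorem hessian_prod_apply_self {m : ℕ} {g g' g'' : Fin m → ℝ → ℝ}
    (hg : ∀ k t, HasDerivAt (g k) (g' k t) t) (hg' : ∀ k t, HasDerivAt (g' k) (g'' k t) t)
    (x : Fin m → ℝ) (i : Fin m) :
    hessian m (fun z => ∏ k, g k (z k)) x i i = g'' i (x i) * ∏ k ∈ univ.erase i, g k (x k) := by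
  have hupd (k : Fin m) (t : ℝ) : HasDerivAt (Function.update g i (g' i) k)
      (Function.update g' i (g'' i) k t) t := by
    rcases eq_or_ne k i with rfl | hk
    · simpa using hg' k t
    · simpa [hk] using hg k t
  rw [hessian, Matrix.of_apply, funext (fderiv_prod_apply_single hg · i),
    fderiv_prod_apply_single hupd, Function.update_idem, prod_update_apply,
    Function.update_self]

section CosineMode

variable {m : ℕ}

noncomputable def cosMode (u : Fin m → ℕ) (x : Fin m → ℝ) : ℝ :=
  ∏ j, cos (π * (u j : ℝ) * x j)

theorem contDiff_cosMode (u : Fin m → ℕ) : ContDiff ℝ 2 (cosMode u) := by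
  unfold cosMode
  fun_prop

theorem hessian_cosMode_apply_self (u : Fin m → ℕ) (x : Fin m → ℝ) (i : Fin m) :
    hessian m (cosMode u) x i i = -(π * u i) ^ 2 * cosMode u x := by
  have hg (k : Fin m) (t : ℝ) : HasDerivAt (fun s => cos (π * u k * s))
      (-sin (π * u k * t) * (π * u k)) t := by
    simpa using ((hasDerivAt_id t).const_mul (π * u k)).cos
  have hg' (k : Fin m) (t : ℝ) : HasDerivAt (fun s => -sin (π * u k * s) * (π * u k))
      (-(cos (π * u k * t) * (π * u k)) * (π * u k)) t := by
    simpa using (((hasDerivAt_id t).const_mul (π * u k)).sin.neg).mul_const (π * u k)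
  unfold cosMode
  rw [hessian_prod_apply_self hg hg', ← mul_prod_erase _ _ (mem_univ i)]
  ring

theorem trace_hessian_cosMode (u : Fin m → ℕ) (x : Fin m → ℝ) :
    (hessian m (cosMode u) x).trace = -(π ^ 2 * ∑ j, (u j : ℝ) ^ 2) * cosMode u x := by
  simp only [Matrix.trace, Matrix.diag, hessian_cosMode_apply_self, ← sum_mul, mul_sum,
    ← sum_neg_distrib, mul_pow]

end CosineMode

theorem hessian_sgmPotential (m : ℕ) (U : Finset (Fin m → ℕ)) (θ : U → ℝ) (x : Fin m → ℝ) :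
    hessian m (sgmPotential m U θ) x
      = 1 + ∑ v, θ v • (-(π ^ 2)⁻¹ • hessian m (cosMode (v : Fin m → ℕ)) x) := by
  have hmode (v : U) : ContDiffAt ℝ 2 (fun y => θ v / π ^ 2 * cosMode v y) x :=
    contDiffAt_const.mul (contDiff_cosMode _).contDiffAt
  change hessian m (fun y => 1 / 2 * ∑ j, y j ^ 2 - ∑ v, θ v / π ^ 2 * cosMode v y) x = _
  rw [hessian_sub (by fun_prop) (ContDiffAt.sum fun v _ => hmode v), hessian_half_sum_sq,
    hessian_sum fun v _ => hmode v]
  simp only [hessian_const_mul _ (contDiff_cosMode _).contDiffAt, smul_smul, sub_eq_add_neg,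
    ← sum_neg_distrib, ← neg_smul]
  congr 1
  refine sum_congr rfl fun v _ => ?_
  congr 1
  ring

theorem sgm_score_at_zero_general (m : ℕ) (U : Finset (Fin m → ℕ)) (u : U)
    (x : Fin m → ℝ) :
    fderiv ℝ (fun θ : U → ℝ => Real.log (sgmDensity m U θ x)) 0 (Pi.single u 1)
      = (∑ j, ((u : Fin m → ℕ) j : ℝ) ^ 2) *
        ∏ j, Real.cos (Real.pi * ((u : Fin m → ℕ) j : ℝ) * x j) := by
  simp only [sgmDensity, hessian_sgmPotential]
  rw [fderiv_log_det_one_add_sum_smul, Matrix.trace_smul, trace_hessian_cosMode, cosMode,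
    smul_eq_mul]
  field_simp

/-- The score function at θ = 0: the partial derivative of log p(x|θ) with respect to θ_u
at θ = 0 equals ‖u‖² Π_j cos(π u_j x_j). -/
theorem sgm_score_at_zero (m : ℕ) (hm : 0 < m) (U : Finset (Fin m → ℕ)) (u : U)
    (x : Fin m → ℝ) (hx : x ∈ Set.Icc (0 : Fin m → ℝ) 1) :
    fderiv ℝ (fun θ : U → ℝ => Real.log (sgmDensity m U θ x)) 0 (Pi.single u 1)
      = (∑ j, ((u : Fin m → ℕ) j : ℝ) ^ 2) *
        ∏ j, Real.cos (Real.pi * ((u : Fin m → ℕ) j : ℝ) * x j) :=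
  sgm_score_at_zero_general m U u x
end

section
/- For any real θ with 0 < |θ| < 1, the double integral over [0,1]² of cos²(π(x₁ − x₂))/(1 + θ cos(π(x₁ − x₂))) + cos²(π(x₁ + x₂))/(1 + θ cos(π(x₁ + x₂))) with respect to (x₁, x₂) equals 2(1 − √(1 − θ²)) / (θ² √(1 − θ²)). -/
/-!
Both summands are `f (x₁ ∓ x₂)` for the 2-periodic `f t = cos² (π t) / (1 + θ cos (π t))`, so the
inner integral equals `∫₋₁¹ f` whatever `x₁` is. Writing
`cos² / (1 + θ cos) = cos / θ - 1 / θ² + θ⁻² / (1 + θ cos)` reduces that to the classical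
`∫_{-π}^{π} dt / (1 + θ cos t) = 2π / √(1 - θ²)`, which follows from the half-angle antiderivative
`t - 2 arctan (θ sin t / (1 + √(1 - θ²) + θ cos t))`; unlike the textbook `tan (t / 2)` form,
it is continuous on all of `ℝ`.
-/

open Real intervalIntegral

theorem Function.Periodic.intervalIntegral_comp_sub_add_comp_add {E : Type*}
    [NormedAddCommGroup E] [NormedSpace ℝ E] {f : ℝ → E} {c : ℝ} (hf : Continuous f)
    (hper : Function.Periodic f (2 * c)) (x : ℝ) :
    ∫ y in (0 : ℝ)..c, (f (x - y) + f (x + y)) = ∫ t in -c..c, f t := by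
  rw [integral_add ((by fun_prop : Continuous fun y => f (x - y)).intervalIntegrable _ _)
      ((by fun_prop : Continuous fun y => f (x + y)).intervalIntegrable _ _),
    integral_comp_sub_left f x, integral_comp_add_left f x, sub_zero, add_zero,
    integral_add_adjacent_intervals (hf.intervalIntegrable _ _) (hf.intervalIntegrable _ _)]
  have h := hper.intervalIntegral_add_eq (x - c) (-c)
  rwa [show x - c + 2 * c = x + c by ring, show -c + 2 * c = c by ring] at h

theorem one_add_mul_cos_pos {θ : ℝ} (hθ : |θ| < 1) (t : ℝ) : 0 < 1 + θ * cos t := by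
  nlinarith [abs_mul θ (cos t), abs_cos_le_one t, neg_abs_le (θ * cos t), abs_nonneg θ]

theorem continuous_inv_one_add_mul_cos {θ : ℝ} (hθ : |θ| < 1) :
    Continuous fun t => (1 + θ * cos t)⁻¹ :=
  (by fun_prop : Continuous fun t => 1 + θ * cos t).inv₀ (one_add_mul_cos_pos hθ · |>.ne')

theorem hasDerivAt_sub_two_mul_arctan {θ : ℝ} (hθ : |θ| < 1) (t : ℝ) :
    HasDerivAt (fun t => t - 2 * arctan (θ * sin t / (1 + √(1 - θ ^ 2) + θ * cos t)))
      (√(1 - θ ^ 2) / (1 + θ * cos t)) t := by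
  set s := √(1 - θ ^ 2)
  have hs : s ^ 2 = 1 - θ ^ 2 := sq_sqrt (by nlinarith [sq_abs θ, abs_nonneg θ])
  have hpos := one_add_mul_cos_pos hθ t
  have hD : 0 < 1 + s + θ * cos t := by linarith [sqrt_nonneg (1 - θ ^ 2)]
  have hquot := ((hasDerivAt_sin t).const_mul θ).div
    (((hasDerivAt_cos t).const_mul θ).const_add (1 + s)) hD.ne'
  refine ((hasDerivAt_id t).sub (hquot.arctan.const_mul 2)).congr_deriv ?_
  have hpyth := sin_sq_add_cos_sq t
  simp only [Pi.div_apply]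
  field_simp
  -- `(1 + s + θ cos t)² + θ² sin² t = 2 (1 + s) (1 + θ cos t)`
  linear_combination -(1 + s + θ * cos t) * (θ ^ 2 * hpyth + hs)

theorem integral_inv_one_add_mul_cos {θ : ℝ} (hθ : |θ| < 1) :
    ∫ t in -π..π, (1 + θ * cos t)⁻¹ = 2 * π / √(1 - θ ^ 2) := by
  have hs : 0 < √(1 - θ ^ 2) := sqrt_pos.mpr (by nlinarith [sq_abs θ, abs_nonneg θ])
  have hderiv (t : ℝ) := (hasDerivAt_sub_two_mul_arctan hθ t).div_const √(1 - θ ^ 2)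
  rw [integral_eq_sub_of_hasDerivAt (fun t _ => (hderiv t).congr_deriv ?_)
    ((continuous_inv_one_add_mul_cos hθ).intervalIntegrable _ _)]
  · simp only [sin_pi, sin_neg, mul_zero, neg_zero, zero_div, arctan_zero, sub_zero]
    ring
  · field_simp [(one_add_mul_cos_pos hθ t).ne']

theorem integral_cos_sq_div_one_add_mul_cos {θ : ℝ} (hθ0 : θ ≠ 0) (hθ1 : |θ| < 1) :
    ∫ t in -π..π, cos t ^ 2 / (1 + θ * cos t)
      = 2 * π * (1 - √(1 - θ ^ 2)) / (θ ^ 2 * √(1 - θ ^ 2)) := by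
  have hs : 0 < √(1 - θ ^ 2) := sqrt_pos.mpr (by nlinarith [sq_abs θ, abs_nonneg θ])
  have hsplit (t : ℝ) : cos t ^ 2 / (1 + θ * cos t)
      = θ⁻¹ * cos t - θ⁻¹ ^ 2 + θ⁻¹ ^ 2 * (1 + θ * cos t)⁻¹ := by
    have hne := (one_add_mul_cos_pos hθ1 t).ne'
    rw [eq_comm, ← sub_eq_zero]
    field_simp
    ring
  simp only [hsplit]
  rw [integral_add
      ((by fun_prop : Continuous fun t => θ⁻¹ * cos t - θ⁻¹ ^ 2).intervalIntegrable _ _)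
      (((continuous_inv_one_add_mul_cos hθ1).const_mul _).intervalIntegrable _ _),
    integral_sub ((continuous_cos.const_mul _).intervalIntegrable _ _) intervalIntegrable_const,
    integral_const_mul, integral_const_mul, integral_cos, integral_const,
    integral_inv_one_add_mul_cos hθ1]
  simp only [sin_pi, sin_neg, neg_zero, sub_zero, mul_zero, smul_eq_mul]
  field_simp
  ring

/-- The Fisher information J_{uu}(θ) of SGM with m = 2 and U = {(1,1)}:
the double integral over [0,1]² of
cos²(π(x₁−x₂))/(1+θcos(π(x₁−x₂))) + cos²(π(x₁+x₂))/(1+θcos(π(x₁+x₂)))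
equals 2(1 − √(1 − θ²))/(θ²√(1 − θ²)) for 0 < |θ| < 1. -/
theorem fisher_integral_two_dim (θ : ℝ) (hθ0 : θ ≠ 0) (hθ1 : |θ| < 1) :
    (∫ x₁ in (0 : ℝ)..1, ∫ x₂ in (0 : ℝ)..1,
        (Real.cos (Real.pi * (x₁ - x₂)) ^ 2 / (1 + θ * Real.cos (Real.pi * (x₁ - x₂))) +
          Real.cos (Real.pi * (x₁ + x₂)) ^ 2 / (1 + θ * Real.cos (Real.pi * (x₁ + x₂)))))
      = 2 * (1 - Real.sqrt (1 - θ ^ 2)) / (θ ^ 2 * Real.sqrt (1 - θ ^ 2)) := by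
  set f : ℝ → ℝ := fun t => cos (π * t) ^ 2 / (1 + θ * cos (π * t))
  have hf : Continuous f :=
    (by fun_prop : Continuous fun t => cos (π * t) ^ 2).div (by fun_prop)
      fun t => (one_add_mul_cos_pos hθ1 _).ne'
  have hper : Function.Periodic f (2 * 1) := fun t => by
    simp only [f, show π * (t + 2 * 1) = π * t + 2 * π by ring, cos_add_two_pi]
  have hline : ∫ t in (-1 : ℝ)..1, f t = 2 * (1 - √(1 - θ ^ 2)) / (θ ^ 2 * √(1 - θ ^ 2)) := by
    rw [integral_comp_mul_left (fun t => cos t ^ 2 / (1 + θ * cos t)) pi_ne_zero, mul_neg_one,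
      mul_one, integral_cos_sq_div_one_add_mul_cos hθ0 hθ1, smul_eq_mul]
    field_simp
  calc _ = ∫ _ in (0 : ℝ)..1, ∫ t in (-1 : ℝ)..1, f t :=
        integral_congr fun x₁ _ => hper.intervalIntegral_comp_sub_add_comp_add hf x₁
    _ = _ := by simp [hline]
end

section
/- The little parameter space Θ^lit = {θ ∈ ℝ^U : Σ_{u∈U} |θ_u| u_j² ≤ 1 for all j = 1, …, m} is contained in the feasible region Θ; that is, if Σ_{u∈U} |θ_u| u_j² ≤ 1 for every coordinate j, then D²ψ(x|θ) is positive semidefinite for every x ∈ [0,1]^m. -/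
open Real

/-!
Averaging over sign patterns `ε ∈ {±1}ᵐ`, the product-to-sum formula
`∏ⱼ cos aⱼ = 2⁻ᵐ ∑_ε cos (∑ⱼ εⱼ aⱼ)` writes `ψ` as `½|x|²` minus a combination of plane waves
`cos ⟪w, x⟫` with `w = π (εⱼ uⱼ)ⱼ`, whence `D²ψ(x) = I + ∑_{u,ε} θ_u π⁻² 2⁻ᵐ cos ⟪w, x⟫ w wᵀ`.
The perturbation's quadratic form is bounded in absolute value by `∑_{u,ε} |θ_u| π⁻² 2⁻ᵐ ⟪w, v⟫²`,
and since the cross terms cancel in `∑_ε (∑ⱼ εⱼ bⱼ)² = 2ᵐ ∑ⱼ bⱼ²`, this bound equals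
`∑ⱼ (∑_u |θ_u| uⱼ²) vⱼ² ≤ |v|²`.
-/

open Matrix

namespace SGM

lemma sum_fun_fin_succ {α M : Type*} [Fintype α] [AddCommMonoid M] {n : ℕ}
    (f : (Fin (n + 1) → α) → M) :
    ∑ ε, f ε = ∑ a, ∑ ε : Fin n → α, f (Fin.cons a ε) := by
  rw [← Fintype.sum_prod_type']
  exact (Fintype.sum_equiv (Fin.consEquiv fun _ => α) _ _ fun _ => rfl).symm

def boolSign (b : Bool) : ℝ := if b then 1 else -1

def signedSum {n : ℕ} (ε : Fin n → Bool) (a : Fin n → ℝ) : ℝ := ∑ j, boolSign (ε j) * a j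

lemma signedSum_cons {n : ℕ} (b : Bool) (ε : Fin n → Bool) (a : Fin (n + 1) → ℝ) :
    signedSum (Fin.cons b ε) a = boolSign b * a 0 + signedSum ε fun j => a j.succ := by
  simp only [signedSum, Fin.sum_univ_succ, Fin.cons_zero, Fin.cons_succ]

theorem sum_cos_signedSum : ∀ {n : ℕ} (a : Fin n → ℝ),
    ∑ ε, cos (signedSum ε a) = 2 ^ n * ∏ j, cos (a j)
  | 0, a => by simp [signedSum]
  | n + 1, a => by
    have pair (S : ℝ) :
        cos (boolSign true * a 0 + S) + cos (boolSign false * a 0 + S) = 2 * cos (a 0) * cos S := by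
      simp only [boolSign, if_true, Bool.false_eq_true, if_false, cos_add, one_mul, neg_one_mul,
        cos_neg, sin_neg]
      ring
    rw [sum_fun_fin_succ, Fintype.sum_bool, ← Finset.sum_add_distrib]
    simp only [signedSum_cons, pair, ← Finset.mul_sum, sum_cos_signedSum, Fin.prod_univ_succ]
    ring

theorem sum_signedSum_sq : ∀ {n : ℕ} (b : Fin n → ℝ),
    ∑ ε, signedSum ε b ^ 2 = 2 ^ n * ∑ j, b j ^ 2
  | 0, b => by simp [signedSum]
  | n + 1, b => by
    have pair (S : ℝ) :
        (boolSign true * b 0 + S) ^ 2 + (boolSign false * b 0 + S) ^ 2 = 2 * b 0 ^ 2 + 2 * S ^ 2 := by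
      simp only [boolSign, if_true, Bool.false_eq_true, if_false]
      ring
    rw [sum_fun_fin_succ, Fintype.sum_bool, ← Finset.sum_add_distrib]
    simp only [signedSum_cons, pair, Finset.sum_add_distrib, ← Finset.mul_sum, sum_signedSum_sq,
      Finset.sum_const, Finset.card_univ, Fintype.card_fun, Fintype.card_bool, Fintype.card_fin,
      nsmul_eq_mul, Fin.sum_univ_succ]
    push_cast
    ring

theorem posSemidef_one_add_sum_smul_vecMulVec {n ι : Type*} [Fintype n] [DecidableEq n]
    [Fintype ι] (a : ι → ℝ) (w : ι → n → ℝ)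
    (h : ∀ v, ∑ k, |a k| * (w k ⬝ᵥ v) ^ 2 ≤ v ⬝ᵥ v) :
    (1 + ∑ k, a k • vecMulVec (w k) (w k)).PosSemidef := by
  refine .of_dotProduct_mulVec_nonneg ?_ fun v => ?_
  · ext i j
    simp [Matrix.one_apply, Matrix.sum_apply, vecMulVec_apply, eq_comm, mul_comm]
  have hquad : star v ⬝ᵥ ((1 + ∑ k, a k • vecMulVec (w k) (w k)) *ᵥ v) =
      v ⬝ᵥ v + ∑ k, a k * (w k ⬝ᵥ v) ^ 2 := by
    simp only [star_trivial, add_mulVec, one_mulVec, sum_mulVec, smul_mulVec, vecMulVec_mulVec,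
      op_smul_eq_smul, dotProduct_add, dotProduct_sum, dotProduct_smul, smul_eq_mul,
      dotProduct_comm v (w _), sq]
  have hlower : -(v ⬝ᵥ v) ≤ ∑ k, a k * (w k ⬝ᵥ v) ^ 2 := by
    refine (neg_le_neg (h v)).trans ?_
    rw [← Finset.sum_neg_distrib]
    exact Finset.sum_le_sum fun k _ => by
      rw [← neg_mul]; exact mul_le_mul_of_nonneg_right (neg_abs_le _) (sq_nonneg _)
  linarith

section Calculus

variable {n : Type*} [Fintype n] {m : ℕ}

noncomputable def dotProductCLM (w : n → ℝ) : (n → ℝ) →L[ℝ] ℝ :=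
  LinearMap.toContinuousLinearMap (dotProductBilin ℝ ℝ w)

@[simp]
lemma dotProductCLM_apply (w x : n → ℝ) : dotProductCLM w x = w ⬝ᵥ x := rfl

lemma hasFDerivAt_half_sum_sq (x : n → ℝ) :
    HasFDerivAt (fun y : n → ℝ => (1 / 2) * ∑ j, y j ^ 2) (dotProductCLM x) x := by
  refine ((HasFDerivAt.fun_sum fun j _ =>
    ((ContinuousLinearMap.proj (R := ℝ) (φ := fun _ : n => ℝ) j).hasFDerivAt (x := x)).pow 2
    ).const_mul (1 / 2 : ℝ)).congr_fderiv (ContinuousLinearMap.ext fun v => ?_)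
  simp only [_root_.smul_apply, _root_.sum_apply, ContinuousLinearMap.proj_apply,
    dotProductCLM_apply, dotProduct, Finset.mul_sum, smul_eq_mul]
  exact Finset.sum_congr rfl fun j _ => by ring

lemma hasFDerivAt_cos_dotProduct (w x : n → ℝ) :
    HasFDerivAt (fun y => cos (w ⬝ᵥ y)) (-sin (w ⬝ᵥ x) • dotProductCLM w) x :=
  (hasDerivAt_cos _).comp_hasFDerivAt x (dotProductCLM w).hasFDerivAt

lemma hasFDerivAt_sin_dotProduct (w x : n → ℝ) :
    HasFDerivAt (fun y => sin (w ⬝ᵥ y)) (cos (w ⬝ᵥ x) • dotProductCLM w) x :=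
  (hasDerivAt_sin _).comp_hasFDerivAt x (dotProductCLM w).hasFDerivAt

lemma hessian_apply_of_hasFDerivAt {f : (Fin m → ℝ) → ℝ}
    {f' : (Fin m → ℝ) → (Fin m → ℝ) →L[ℝ] ℝ} {g : (Fin m → ℝ) →L[ℝ] ℝ} {x : Fin m → ℝ}
    {i j : Fin m} (hf : ∀ y, HasFDerivAt f (f' y) y)
    (hg : HasFDerivAt (fun y => f' y (Pi.single j 1)) g x) :
    hessian m f x i j = g (Pi.single i 1) := by
  have hf' : (fun y => fderiv ℝ f y (Pi.single j 1)) = fun y => f' y (Pi.single j 1) :=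
    funext fun y => by rw [(hf y).fderiv]
  simp only [hessian, Matrix.of_apply, hf', hg.fderiv]

theorem hessian_half_sum_sq_sub_sum_cos {ι : Type*} [Fintype ι] (c : ι → ℝ) (w : ι → Fin m → ℝ)
    (x : Fin m → ℝ) :
    hessian m (fun y => (1 / 2) * ∑ j, y j ^ 2 - ∑ k, c k * cos (w k ⬝ᵥ y)) x =
      1 + ∑ k, (c k * cos (w k ⬝ᵥ x)) • vecMulVec (w k) (w k) := by
  ext i j
  have hf (y : Fin m → ℝ) : HasFDerivAt (fun y => (1 / 2) * ∑ j, y j ^ 2 - ∑ k, c k * cos (w k ⬝ᵥ y))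
      (dotProductCLM y + ∑ k, (c k * sin (w k ⬝ᵥ y)) • dotProductCLM (w k)) y := by
    refine ((hasFDerivAt_half_sum_sq y).sub (HasFDerivAt.fun_sum fun k _ =>
      (hasFDerivAt_cos_dotProduct (w k) y).const_mul (c k))).congr_fderiv ?_
    ext v
    simpa using Finset.sum_congr rfl fun k _ => by ring
  have hg : HasFDerivAt
      (fun y => (dotProductCLM y + ∑ k, (c k * sin (w k ⬝ᵥ y)) • dotProductCLM (w k)) (Pi.single j 1))
      (ContinuousLinearMap.proj j + ∑ k, (c k * w k j * cos (w k ⬝ᵥ x)) • dotProductCLM (w k)) x := by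
    have e : (fun y => (dotProductCLM y + ∑ k, (c k * sin (w k ⬝ᵥ y)) • dotProductCLM (w k))
        (Pi.single j 1)) = fun y => y j + ∑ k, (c k * w k j) * sin (w k ⬝ᵥ y) := by
      funext y
      simpa using Finset.sum_congr rfl fun k _ => by ring
    rw [e]
    refine ((hasFDerivAt_apply j x).add (HasFDerivAt.fun_sum fun k _ =>
      (hasFDerivAt_sin_dotProduct (w k) x).const_mul (c k * w k j))).congr_fderiv ?_
    ext v
    simpa using Finset.sum_congr rfl fun k _ => by ring
  rw [hessian_apply_of_hasFDerivAt hf hg]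
  simp only [_root_.add_apply, _root_.sum_apply, _root_.smul_apply,
    ContinuousLinearMap.proj_apply, dotProductCLM_apply, dotProduct_single, smul_eq_mul, mul_one,
    Matrix.add_apply, Matrix.sum_apply, Matrix.smul_apply, vecMulVec_apply, Matrix.one_apply,
    Pi.single_apply]
  exact congrArg₂ (· + ·) (if_congr eq_comm rfl rfl) (Finset.sum_congr rfl fun k _ => by ring)

end Calculus

section Potential

variable {m : ℕ}

noncomputable def signedFrequency (u : Fin m → ℕ) (ε : Fin m → Bool) : Fin m → ℝ :=
  fun j => π * (boolSign (ε j) * u j)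

lemma signedFrequency_dotProduct (u : Fin m → ℕ) (ε : Fin m → Bool) (y : Fin m → ℝ) :
    signedFrequency u ε ⬝ᵥ y = signedSum ε fun j => π * u j * y j :=
  Finset.sum_congr rfl fun j _ => by simp only [signedFrequency]; ring

theorem sgmPotential_eq_sum_cos (U : Finset (Fin m → ℕ)) (θ : U → ℝ) :
    sgmPotential m U θ = fun y => (1 / 2) * ∑ j, y j ^ 2 -
      ∑ p : U × (Fin m → Bool),
        θ p.1 / π ^ 2 / 2 ^ m * cos (signedFrequency (p.1 : Fin m → ℕ) p.2 ⬝ᵥ y) := by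
  funext y
  rw [sgmPotential, Fintype.sum_prod_type]
  congr 1
  refine Finset.sum_congr rfl fun u _ => ?_
  simp only [signedFrequency_dotProduct, ← Finset.mul_sum, sum_cos_signedSum]
  field_simp

lemma sum_signedFrequency_dotProduct_sq (u : Fin m → ℕ) (v : Fin m → ℝ) :
    ∑ ε, (signedFrequency u ε ⬝ᵥ v) ^ 2 = 2 ^ m * π ^ 2 * ∑ j, (u j : ℝ) ^ 2 * v j ^ 2 := by
  simp only [signedFrequency_dotProduct, sum_signedSum_sq, Finset.mul_sum]
  exact Finset.sum_congr rfl fun j _ => by ring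

lemma sum_abs_coeff_mul_signedFrequency_dotProduct_sq (U : Finset (Fin m → ℕ)) (θ : U → ℝ)
    (v : Fin m → ℝ) :
    ∑ p : U × (Fin m → Bool),
        |θ p.1 / π ^ 2 / 2 ^ m| * (signedFrequency (p.1 : Fin m → ℕ) p.2 ⬝ᵥ v) ^ 2 =
      ∑ j, (∑ u : U, |θ u| * ((u : Fin m → ℕ) j : ℝ) ^ 2) * v j ^ 2 := by
  simp only [Fintype.sum_prod_type, ← Finset.mul_sum, sum_signedFrequency_dotProduct_sq, abs_div,
    abs_of_pos pi_pos, abs_pow, abs_two]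
  simp only [Finset.mul_sum, Finset.sum_mul]
  rw [Finset.sum_comm]
  refine Finset.sum_congr rfl fun j _ => Finset.sum_congr rfl fun u _ => ?_
  field_simp

end Potential

end SGM

theorem little_parameter_space_subset_feasible_general (m : ℕ)
    (U : Finset (Fin m → ℕ)) (θ : U → ℝ)
    (hθ : ∀ j : Fin m, ∑ u : U, |θ u| * ((u : Fin m → ℕ) j : ℝ) ^ 2 ≤ 1) :
    ∀ x ∈ Set.Icc (0 : Fin m → ℝ) 1,
      (hessian m (sgmPotential m U θ) x).PosSemidef := by
  intro x _
  rw [SGM.sgmPotential_eq_sum_cos, SGM.hessian_half_sum_sq_sub_sum_cos]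
  refine SGM.posSemidef_one_add_sum_smul_vecMulVec _ _ fun v => ?_
  set w : U × (Fin m → Bool) → Fin m → ℝ := fun p => SGM.signedFrequency (p.1 : Fin m → ℕ) p.2
  calc ∑ p, |θ p.1 / π ^ 2 / 2 ^ m * cos (w p ⬝ᵥ x)| * (w p ⬝ᵥ v) ^ 2
      ≤ ∑ p, |θ p.1 / π ^ 2 / 2 ^ m| * (w p ⬝ᵥ v) ^ 2 := by
        refine Finset.sum_le_sum fun p _ => mul_le_mul_of_nonneg_right ?_ (sq_nonneg _)
        rw [abs_mul]
        exact mul_le_of_le_one_right (abs_nonneg _) (abs_cos_le_one _)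
    _ = ∑ j, (∑ u : U, |θ u| * ((u : Fin m → ℕ) j : ℝ) ^ 2) * v j ^ 2 :=
        SGM.sum_abs_coeff_mul_signedFrequency_dotProduct_sq U θ v
    _ ≤ ∑ j, 1 * v j ^ 2 :=
        Finset.sum_le_sum fun j _ => mul_le_mul_of_nonneg_right (hθ j) (sq_nonneg _)
    _ = v ⬝ᵥ v := by simp [dotProduct, sq]

/-- The little parameter space Θ^lit is contained in the feasible region Θ: if
Σ_{u∈U} |θ_u| u_j² ≤ 1 for every coordinate j, then D²ψ(x|θ) is positive semidefinite
for every x ∈ [0,1]^m. -/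
theorem little_parameter_space_subset_feasible (m : ℕ) (hm : 0 < m)
    (U : Finset (Fin m → ℕ)) (θ : U → ℝ)
    (hθ : ∀ j : Fin m, ∑ u : U, |θ u| * ((u : Fin m → ℕ) j : ℝ) ^ 2 ≤ 1) :
    ∀ x ∈ Set.Icc (0 : Fin m → ℝ) 1,
      (hessian m (sgmPotential m U θ) x).PosSemidef :=
  little_parameter_space_subset_feasible_general m U θ hθ
end

section
/- Suppose a subset V ⊂ U is linearly independent modulo 2, i.e. the linear map ℓ : {0,1}^V → (ℤ/2ℤ)^m defined by ℓ(ε) = Σ_{u∈V} ε_u u (mod 2) has kernel {0}. Then Θ^lit ∩ ℝ_V = Θ ∩ ℝ_V, where ℝ_V = {θ ∈ ℝ^U : θ_u = 0 for all u ∉ V}. In particular, if U itself is linearly independent modulo 2, then Θ^lit = Θ. -/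
/-!
Averaging over sign vectors `σ ∈ {±1}ᵐ` turns the product of cosines into a sum of plane waves:
`2ᵐ ∏ⱼ cos (π uⱼ xⱼ) = ∑_σ cos ⟪w_{u,σ}, x⟫` with `w_{u,σ} = (π σⱼ uⱼ)ⱼ`. Hence
`D²ψ(x) = I + ∑_{u,σ} 2⁻ᵐ π⁻² θ_u cos ⟪w_{u,σ}, x⟫ w_{u,σ} w_{u,σ}ᵀ`, and since
`∑_σ ⟪w_{u,σ}, v⟫² = 2ᵐ π² ∑ⱼ uⱼ² vⱼ²`, the perturbation of the identity has quadratic form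
bounded by `∑ⱼ vⱼ² ∑_u |θ_u| uⱼ²`; this gives `Θ^lit ⊆ Θ`.

Conversely, `D²ψ(x)ⱼⱼ = 1 + ∑_u θ_u uⱼ² ∏ₖ cos (π uₖ xₖ)`, and at a vertex `x ∈ {0,1}ᵐ` of the cube
the product is `(-1)^⟪u, x⟫`. Independence of `V` modulo 2 says that the map
`x ↦ (⟪u, x⟫ mod 2)_{u ∈ V}` from `(ℤ/2)ᵐ` to `(ℤ/2)^V` has injective transpose, so it is onto and
some vertex has `⟪u, x⟫` odd exactly when `θ_u > 0`. There the diagonal entry is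
`1 - ∑_u |θ_u| uⱼ²`, which must be nonnegative.
-/

open Real

open Matrix

noncomputable def boolSign (b : Bool) : ℝ := if b then 1 else -1

lemma sum_boolSign_succ {n : ℕ} (F : ℝ → ℝ) (a : Fin (n + 1) → ℝ) :
    ∑ σ : Fin (n + 1) → Bool, F (∑ j, boolSign (σ j) * a j)
      = ∑ τ : Fin n → Bool, (F (a 0 + ∑ j, boolSign (τ j) * a j.succ)
          + F (-a 0 + ∑ j, boolSign (τ j) * a j.succ)) := by
  rw [← (Fin.consEquiv fun _ => Bool).sum_comp, Fintype.sum_prod_type, Fintype.sum_bool,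
    ← Finset.sum_add_distrib]
  simp [Fin.consEquiv, Fin.sum_univ_succ, boolSign]

theorem two_pow_mul_prod_cos {n : ℕ} (a : Fin n → ℝ) :
    2 ^ n * ∏ j, cos (a j) = ∑ σ : Fin n → Bool, cos (∑ j, boolSign (σ j) * a j) := by
  induction n with
  | zero => simp
  | succ n ih =>
    rw [sum_boolSign_succ, Fin.prod_univ_succ]
    have cos_add_cos_neg (S : ℝ) : cos (a 0 + S) + cos (-a 0 + S) = 2 * cos (a 0) * cos S := by
      simp only [cos_add, cos_neg, sin_neg]; ring
    simp only [cos_add_cos_neg, ← Finset.mul_sum, ← ih]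
    ring

theorem sum_sq_boolSign_sum {n : ℕ} (b : Fin n → ℝ) :
    ∑ σ : Fin n → Bool, (∑ j, boolSign (σ j) * b j) ^ 2 = 2 ^ n * ∑ j, b j ^ 2 := by
  induction n with
  | zero => simp
  | succ n ih =>
    rw [sum_boolSign_succ (· ^ 2), Fin.sum_univ_succ]
    have sq_add_sq_neg (S : ℝ) : (b 0 + S) ^ 2 + (-b 0 + S) ^ 2 = 2 * b 0 ^ 2 + 2 * S ^ 2 := by
      ring
    simp only [sq_add_sq_neg, Finset.sum_add_distrib, ← Finset.mul_sum, ih, Finset.sum_const,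
      Finset.card_univ, Fintype.card_fun, Fintype.card_bool, Fintype.card_fin, nsmul_eq_mul]
    push_cast
    ring

section Derivatives

variable {ι : Type*} [Fintype ι]

noncomputable def dotProductCLM (w : ι → ℝ) : (ι → ℝ) →L[ℝ] ℝ :=
  ∑ k, w k • ContinuousLinearMap.proj k

@[simp]
lemma dotProductCLM_apply (w y : ι → ℝ) : dotProductCLM w y = w ⬝ᵥ y := by
  simp [dotProductCLM, dotProduct]

lemma hasFDerivAt_dotProduct (w x : ι → ℝ) :
    HasFDerivAt (fun y => w ⬝ᵥ y) (dotProductCLM w) x := by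
  have h : (fun y => w ⬝ᵥ y) = dotProductCLM w := funext fun y => (dotProductCLM_apply w y).symm
  exact h ▸ (dotProductCLM w).hasFDerivAt

lemma hasFDerivAt_half_sum_sq (x : ι → ℝ) :
    HasFDerivAt (fun y : ι → ℝ => 1 / 2 * ∑ j, y j ^ 2) (dotProductCLM x) x := by
  have hsum : HasFDerivAt (fun y : ι → ℝ => ∑ j, y j ^ 2)
      (∑ j, (2 • x j ^ (2 - 1)) • ContinuousLinearMap.proj j) x :=
    HasFDerivAt.fun_sum fun j _ => (hasFDerivAt_apply (𝕜 := ℝ) j x).pow 2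
  refine (hsum.const_mul (1 / 2 : ℝ)).congr_fderiv ?_
  ext v
  simp [dotProduct, Finset.mul_sum, ← mul_assoc]

end Derivatives

theorem hessian_half_sum_sq_sub_sum_cos {m : ℕ} {κ : Type*} [Fintype κ] (c : κ → ℝ)
    (w : κ → Fin m → ℝ) (x : Fin m → ℝ) :
    hessian m (fun y => 1 / 2 * ∑ j, y j ^ 2 - ∑ k, c k * cos (w k ⬝ᵥ y)) x
      = 1 + ∑ k, (c k * cos (w k ⬝ᵥ x)) • vecMulVec (w k) (w k) := by
  have partial_eq (j : Fin m) (y : Fin m → ℝ) :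
      fderiv ℝ (fun y => 1 / 2 * ∑ j, y j ^ 2 - ∑ k, c k * cos (w k ⬝ᵥ y)) y (Pi.single j 1)
        = y j + ∑ k, c k * w k j * sin (w k ⬝ᵥ y) := by
    have hf := (hasFDerivAt_half_sum_sq y).fun_sub (HasFDerivAt.fun_sum (u := Finset.univ)
      fun k _ => ((hasFDerivAt_dotProduct (w k) y).cos).const_mul (c k))
    rw [hf.fderiv]
    simp [dotProduct_single, mul_assoc, mul_comm (sin _)]
  have hpartial (j : Fin m) : HasFDerivAt (fun y => y j + ∑ k, c k * w k j * sin (w k ⬝ᵥ y))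
      (ContinuousLinearMap.proj j + ∑ k, (c k * w k j) • (cos (w k ⬝ᵥ x) • dotProductCLM (w k)))
      x :=
    (hasFDerivAt_apply j x).add (HasFDerivAt.fun_sum fun k _ =>
      ((hasFDerivAt_dotProduct (w k) x).sin).const_mul (c k * w k j))
  ext i j
  rw [hessian, of_apply, funext (partial_eq j), (hpartial j).fderiv]
  simp [one_apply, vecMulVec, Pi.single_apply, Matrix.sum_apply, eq_comm, mul_assoc, mul_comm,
    mul_left_comm]

theorem Matrix.mulVec_surjective_of_vecMul_injective {K A n : Type*} [Field K] [Fintype A]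
    [Fintype n] {M : Matrix A n K} (h : Function.Injective M.vecMul) :
    Function.Surjective M.mulVec := by
  have hrank : Module.finrank K (LinearMap.range M.mulVecLin) = Module.finrank K (A → K) := by
    rw [← Matrix.rank, (vecMul_injective_iff.mp h).rank_matrix, Module.finrank_fintype_fun_eq_card]
  rw [← coe_mulVecLin, ← LinearMap.range_eq_top]
  exact Submodule.eq_top_of_finrank_eq hrank

theorem exists_nat_solution_mod_prime {A : Type*} [Fintype A] {m p : ℕ} [Fact p.Prime]
    (v : A → Fin m → ℕ)
    (hv : ∀ ε : A → ZMod p, (∀ j, ∑ a, ε a * (v a j : ZMod p) = 0) → ε = 0) (t : A → ZMod p) :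
    ∃ n : Fin m → ℕ, (∀ j, n j < p) ∧ ∀ a, ((∑ j, v a j * n j : ℕ) : ZMod p) = t a := by
  let M : Matrix A (Fin m) (ZMod p) := of fun a j => v a j
  have hinj : Function.Injective M.vecMul := by
    rw [← coe_vecMulLinear, injective_iff_map_eq_zero]
    exact fun ε hε => hv ε fun j => congrFun hε j
  obtain ⟨x, hx⟩ := mulVec_surjective_of_vecMul_injective hinj t
  refine ⟨fun j => (x j).val, fun j => ZMod.val_lt (x j), fun a => ?_⟩
  rw [← congrFun hx a]
  simp [M, mulVec, dotProduct]

lemma mul_neg_one_pow_eq_neg_abs {t : ℝ} {N : ℕ} (h : (N : ZMod 2) = if 0 < t then 1 else 0) :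
    t * (-1) ^ N = -|t| := by
  split_ifs at h with ht
  · rw [(ZMod.natCast_eq_one_iff_odd.mp h).neg_one_pow, abs_of_pos ht, mul_neg_one]
  · rw [(ZMod.natCast_eq_zero_iff_even.mp h).neg_one_pow, abs_of_nonpos (not_lt.mp ht), mul_one,
      neg_neg]

lemma prod_cos_pi_mul_natCast {ι : Type*} [Fintype ι] (u n : ι → ℕ) :
    ∏ j, cos (π * u j * n j) = (-1) ^ (∑ j, u j * n j) := by
  rw [← Finset.prod_pow_eq_pow_sum]
  refine Finset.prod_congr rfl fun j _ => ?_
  rw [show π * u j * n j = ((u j * n j : ℕ) : ℝ) * π by push_cast; ring, cos_nat_mul_pi]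

section RankOneUpdate

variable {n κ : Type*} [DecidableEq n] [Fintype κ]

lemma isHermitian_one_add_sum_smul_vecMulVec (a : κ → ℝ) (w : κ → n → ℝ) :
    (1 + ∑ k, a k • vecMulVec (w k) (w k)).IsHermitian := by
  refine IsHermitian.ext fun i j => ?_
  simp [one_apply, vecMulVec, Matrix.sum_apply, eq_comm, mul_comm]

variable [Fintype n]

lemma dotProduct_one_add_sum_smul_vecMulVec_mulVec (a : κ → ℝ) (w : κ → n → ℝ) (v : n → ℝ) :
    v ⬝ᵥ ((1 + ∑ k, a k • vecMulVec (w k) (w k)) *ᵥ v) = v ⬝ᵥ v + ∑ k, a k * (w k ⬝ᵥ v) ^ 2 := by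
  simp only [add_mulVec, one_mulVec, sum_mulVec, smul_mulVec, vecMulVec_mulVec, dotProduct_add,
    dotProduct_sum, dotProduct_smul]
  simp [dotProduct_comm v, sq]

lemma posSemidef_one_add_sum_smul_vecMulVec (a : κ → ℝ) (w : κ → n → ℝ)
    (h : ∀ v, ∑ k, |a k| * (w k ⬝ᵥ v) ^ 2 ≤ v ⬝ᵥ v) :
    (1 + ∑ k, a k • vecMulVec (w k) (w k)).PosSemidef := by
  refine .of_dotProduct_mulVec_nonneg (isHermitian_one_add_sum_smul_vecMulVec a w) fun v => ?_
  have hsum : -∑ k, a k * (w k ⬝ᵥ v) ^ 2 ≤ ∑ k, |a k| * (w k ⬝ᵥ v) ^ 2 := by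
    rw [← Finset.sum_neg_distrib]
    exact Finset.sum_le_sum fun k _ => by
      nlinarith [neg_abs_le (a k), sq_nonneg (w k ⬝ᵥ v)]
  rw [star_trivial, dotProduct_one_add_sum_smul_vecMulVec_mulVec]
  linarith [h v]

end RankOneUpdate

section Potential

variable {m : ℕ}

noncomputable def signedFreq (u : Fin m → ℕ) (σ : Fin m → Bool) : Fin m → ℝ :=
  fun j => boolSign (σ j) * (π * u j)

lemma signedFreq_sq (u : Fin m → ℕ) (σ : Fin m → Bool) (j : Fin m) :
    signedFreq u σ j ^ 2 = π ^ 2 * (u j : ℝ) ^ 2 := by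
  cases σ j <;> simp [signedFreq, boolSign] <;> ring

lemma sum_cos_signedFreq_dotProduct (u : Fin m → ℕ) (x : Fin m → ℝ) :
    ∑ σ, cos (signedFreq u σ ⬝ᵥ x) = 2 ^ m * ∏ j, cos (π * u j * x j) := by
  rw [two_pow_mul_prod_cos]
  refine Finset.sum_congr rfl fun σ _ => congrArg cos (Finset.sum_congr rfl fun j _ => ?_)
  simp only [signedFreq]
  ring

lemma sum_sq_signedFreq_dotProduct (u : Fin m → ℕ) (v : Fin m → ℝ) :
    ∑ σ, (signedFreq u σ ⬝ᵥ v) ^ 2 = 2 ^ m * π ^ 2 * ∑ j, (u j : ℝ) ^ 2 * v j ^ 2 := by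
  simp only [signedFreq, dotProduct, mul_assoc, sum_sq_boolSign_sum, mul_pow, Finset.mul_sum]

variable (U : Finset (Fin m → ℕ)) (θ : U → ℝ)

lemma sgmPotential_eq_sum_cos : sgmPotential m U θ = fun x => 1 / 2 * ∑ j, x j ^ 2 -
    ∑ k : U × (Fin m → Bool), θ k.1 / (2 ^ m * π ^ 2) * cos (signedFreq k.1 k.2 ⬝ᵥ x) := by
  funext x
  simp only [sgmPotential, Fintype.sum_prod_type, ← Finset.mul_sum,
    sum_cos_signedFreq_dotProduct]
  congr 1
  refine Finset.sum_congr rfl fun u _ => ?_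
  field_simp

lemma hessian_sgmPotential_s19 (x : Fin m → ℝ) :
    hessian m (sgmPotential m U θ) x = 1 + ∑ k : U × (Fin m → Bool),
      (θ k.1 / (2 ^ m * π ^ 2) * cos (signedFreq k.1 k.2 ⬝ᵥ x)) •
        vecMulVec (signedFreq k.1 k.2) (signedFreq k.1 k.2) := by
  rw [sgmPotential_eq_sum_cos]
  exact hessian_half_sum_sq_sub_sum_cos _ _ x

theorem posSemidef_hessian_sgmPotential
    (hθ : ∀ j, ∑ u : U, |θ u| * ((u : Fin m → ℕ) j : ℝ) ^ 2 ≤ 1) (x : Fin m → ℝ) :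
    (hessian m (sgmPotential m U θ) x).PosSemidef := by
  rw [hessian_sgmPotential_s19]
  refine posSemidef_one_add_sum_smul_vecMulVec _ _ fun v => ?_
  have hc : (0 : ℝ) < 2 ^ m * π ^ 2 := by positivity
  calc ∑ k : U × (Fin m → Bool), |θ k.1 / (2 ^ m * π ^ 2) * cos (signedFreq k.1 k.2 ⬝ᵥ x)|
          * (signedFreq k.1 k.2 ⬝ᵥ v) ^ 2
      ≤ ∑ k : U × (Fin m → Bool), |θ k.1| / (2 ^ m * π ^ 2) * (signedFreq k.1 k.2 ⬝ᵥ v) ^ 2 := by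
        refine Finset.sum_le_sum fun k _ => mul_le_mul_of_nonneg_right ?_ (sq_nonneg _)
        rw [abs_mul, abs_div, abs_of_pos hc]
        exact mul_le_of_le_one_right (by positivity) (abs_cos_le_one _)
    _ = ∑ u : U, |θ u| * ∑ j, ((u : Fin m → ℕ) j : ℝ) ^ 2 * v j ^ 2 := by
        simp only [Fintype.sum_prod_type, ← Finset.mul_sum, sum_sq_signedFreq_dotProduct]
        refine Finset.sum_congr rfl fun u _ => ?_
        field_simp
    _ = ∑ j, v j ^ 2 * ∑ u : U, |θ u| * ((u : Fin m → ℕ) j : ℝ) ^ 2 := by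
        simp only [Finset.mul_sum]
        rw [Finset.sum_comm]
        exact Finset.sum_congr rfl fun j _ => Finset.sum_congr rfl fun u _ => by ring
    _ ≤ ∑ j, v j ^ 2 :=
        Finset.sum_le_sum fun j _ => mul_le_of_le_one_right (sq_nonneg _) (hθ j)
    _ = v ⬝ᵥ v := by simp [dotProduct, sq]

lemma hessian_sgmPotential_apply_self (x : Fin m → ℝ) (j : Fin m) :
    hessian m (sgmPotential m U θ) x j j
      = 1 + ∑ u : U, θ u * ((u : Fin m → ℕ) j : ℝ) ^ 2 * ∏ k, cos (π * (u : Fin m → ℕ) k * x k) := by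
  rw [hessian_sgmPotential_s19]
  simp only [Matrix.add_apply, one_apply_eq, Matrix.sum_apply, Matrix.smul_apply,
    vecMulVec_apply, Fintype.sum_prod_type, smul_eq_mul]
  congr 1
  refine Finset.sum_congr rfl fun u _ => ?_
  simp only [← sq, signedFreq_sq]
  rw [← Finset.sum_mul, ← Finset.mul_sum, sum_cos_signedFreq_dotProduct]
  field_simp

theorem sum_abs_mul_sq_le_one_of_posSemidef_hessian {V : Finset (Fin m → ℕ)} (hVU : V ⊆ U)
    (hV : ∀ ε : V → ZMod 2,
      (∀ j : Fin m, (∑ u : V, ε u * ((u : Fin m → ℕ) j : ZMod 2)) = 0) → ε = 0)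
    (hsupp : ∀ u : U, (u : Fin m → ℕ) ∉ V → θ u = 0)
    (hpsd : ∀ x ∈ Set.Icc (0 : Fin m → ℝ) 1, (hessian m (sgmPotential m U θ) x).PosSemidef)
    (j : Fin m) : ∑ u : U, |θ u| * ((u : Fin m → ℕ) j : ℝ) ^ 2 ≤ 1 := by
  have : Fact (Nat.Prime 2) := ⟨Nat.prime_two⟩
  obtain ⟨n, hn_lt, hn⟩ := exists_nat_solution_mod_prime (fun a : V => (a : Fin m → ℕ)) hV
    fun a => if 0 < θ ⟨a, hVU a.2⟩ then 1 else 0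
  have hx : (fun k => (n k : ℝ)) ∈ Set.Icc (0 : Fin m → ℝ) 1 :=
    ⟨fun k => Nat.cast_nonneg _, fun k => Nat.cast_le_one.mpr (Nat.lt_succ_iff.mp (hn_lt k))⟩
  have hterm (u : U) : θ u * ((u : Fin m → ℕ) j : ℝ) ^ 2 *
      ∏ k, cos (π * (u : Fin m → ℕ) k * n k) = -(|θ u| * ((u : Fin m → ℕ) j : ℝ) ^ 2) := by
    rw [prod_cos_pi_mul_natCast]
    by_cases hu : (u : Fin m → ℕ) ∈ V
    · rw [mul_right_comm, mul_neg_one_pow_eq_neg_abs (hn ⟨u, hu⟩), neg_mul]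
    · simp [hsupp u hu]
  have hdiag := (hpsd _ hx).diag_nonneg (i := j)
  rw [hessian_sgmPotential_apply_self] at hdiag
  simp only [hterm, Finset.sum_neg_distrib] at hdiag
  linarith

end Potential

theorem little_parameter_space_eq_feasible_on_V_general (m : ℕ)
    (U V : Finset (Fin m → ℕ)) (hVU : V ⊆ U)
    (hV : ∀ ε : V → ZMod 2,
      (∀ j : Fin m, (∑ u : V, ε u * ((u : Fin m → ℕ) j : ZMod 2)) = 0) → ε = 0) :
    {θ : U → ℝ |
        (∀ j : Fin m, ∑ u : U, |θ u| * ((u : Fin m → ℕ) j : ℝ) ^ 2 ≤ 1) ∧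
        ∀ u : U, (u : Fin m → ℕ) ∉ V → θ u = 0}
      = {θ : U → ℝ |
          (∀ x ∈ Set.Icc (0 : Fin m → ℝ) 1,
            (hessian m (sgmPotential m U θ) x).PosSemidef) ∧
          ∀ u : U, (u : Fin m → ℕ) ∉ V → θ u = 0} := by
  ext θ
  refine and_congr_left fun hsupp => ⟨fun hlit x _ => posSemidef_hessian_sgmPotential U θ hlit x,
    fun hpsd => sum_abs_mul_sq_le_one_of_posSemidef_hessian U θ hVU hV hsupp hpsd⟩

/-- If V ⊆ U is linearly independent modulo 2 (the map ε ↦ Σ_{u∈V} ε_u u over ℤ/2ℤ has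
trivial kernel), then the little parameter space and the feasible region coincide on
ℝ_V = {θ : θ_u = 0 for u ∉ V}. -/
theorem little_parameter_space_eq_feasible_on_V (m : ℕ) (hm : 0 < m)
    (U V : Finset (Fin m → ℕ)) (hVU : V ⊆ U)
    (hV : ∀ ε : V → ZMod 2,
      (∀ j : Fin m, (∑ u : V, ε u * ((u : Fin m → ℕ) j : ZMod 2)) = 0) → ε = 0) :
    {θ : U → ℝ |
        (∀ j : Fin m, ∑ u : U, |θ u| * ((u : Fin m → ℕ) j : ℝ) ^ 2 ≤ 1) ∧
        ∀ u : U, (u : Fin m → ℕ) ∉ V → θ u = 0}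
      = {θ : U → ℝ |
          (∀ x ∈ Set.Icc (0 : Fin m → ℝ) 1,
            (hessian m (sgmPotential m U θ) x).PosSemidef) ∧
          ∀ u : U, (u : Fin m → ℕ) ∉ V → θ u = 0} :=
  little_parameter_space_eq_feasible_on_V_general m U V hVU hV
end
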